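/- arXiv:1703.08618 — 5 statements merged into one kernel-verified Lean document; each statement's English description precedes it below -/
import Mathlib

section
/- Let X be a diagonal d × d complex matrix. Then there exists a diagonal matrix D with D² = 1 such that ‖D − X‖ ≤ (1 + 1/√2)·‖X² − 1‖, where ‖T‖ = √(tr(T*T)/d) is the normalized Hilbert–Schmidt norm. -/
open Matrix

noncomputable def normHS {n : Type*} [Fintype n] (A : Matrix n n ℂ) : ℝ :=
  Real.sqrt ((Matrix.trace (Aᴴ * A)).re / Fintype.card n)

/-! Entrywise, `X² - 1` has entries `(z - 1)(z + 1)` for the diagonal entries `z` of `X`. Choosing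
the sign `±1` on the side of `z`'s real part makes the other factor have modulus at least `1`, so
`|±1 - z| ≤ |z² - 1|`. Since the Hilbert–Schmidt norm is monotone in the moduli of the entries, this
even gives `‖D - X‖ ≤ ‖X² - 1‖`. -/

namespace Complex

noncomputable def signRe (z : ℂ) : ℂ := if 0 ≤ z.re then 1 else -1

theorem signRe_sq (z : ℂ) : signRe z ^ 2 = 1 := by
  unfold signRe; split_ifs <;> norm_num

theorem norm_signRe_sub_le (z : ℂ) : ‖signRe z - z‖ ≤ ‖z ^ 2 - 1‖ := by
  rw [show z ^ 2 - 1 = (z - 1) * (z + 1) by ring, norm_mul]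
  unfold signRe
  split_ifs with hz
  · have h : 1 ≤ ‖z + 1‖ := by
      have := re_le_norm (z + 1)
      simp only [add_re, one_re] at this
      linarith
    rw [norm_sub_rev]
    exact le_mul_of_one_le_right (norm_nonneg _) h
  · have h : 1 ≤ ‖z - 1‖ := by
      have := abs_re_le_norm (z - 1)
      simp only [sub_re, one_re] at this
      linarith [neg_abs_le (z.re - 1)]
    rw [show -1 - z = -(z + 1) by ring, norm_neg]
    exact le_mul_of_one_le_left (norm_nonneg _) h

end Complex

theorem Matrix.re_trace_conjTranspose_mul_self {m n : Type*} [Fintype m] [Fintype n]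
    (A : Matrix m n ℂ) : (Aᴴ * A).trace.re = ∑ j, ∑ i, ‖A i j‖ ^ 2 := by
  simp only [trace, diag, mul_apply, conjTranspose_apply, Complex.re_sum]
  refine Finset.sum_congr rfl fun j _ => Finset.sum_congr rfl fun i _ => ?_
  rw [← Complex.normSq_eq_norm_sq, Complex.normSq_apply, Complex.mul_re]
  simp only [RCLike.star_def, Complex.conj_re, Complex.conj_im]
  ring

theorem normHS_mono {n : Type*} [Fintype n] {A B : Matrix n n ℂ}
    (h : ∀ i j, ‖A i j‖ ≤ ‖B i j‖) : normHS A ≤ normHS B := by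
  unfold normHS
  rw [re_trace_conjTranspose_mul_self, re_trace_conjTranspose_mul_self]
  gcongr with j _ i _
  exact h i j

theorem normHS_diagonal_le {n : Type*} [Fintype n] [DecidableEq n] {a b : n → ℂ}
    (h : ∀ i, ‖a i‖ ≤ ‖b i‖) : normHS (diagonal a) ≤ normHS (diagonal b) := by
  refine normHS_mono fun i j => ?_
  rcases eq_or_ne i j with rfl | hij
  · simpa using h i
  · simp [diagonal_apply_ne _ hij]

theorem stmt_2 (d : ℕ) (X : Matrix (Fin d) (Fin d) ℂ) (hX : X.IsDiag) :
    ∃ D : Matrix (Fin d) (Fin d) ℂ, D.IsDiag ∧ D ^ 2 = 1 ∧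
      normHS (D - X) ≤ (1 + 1 / Real.sqrt 2) * normHS (X ^ 2 - 1) := by
  set z := X.diag
  have hXz : X = diagonal z := hX.diagonal_diag.symm
  refine ⟨diagonal fun i => Complex.signRe (z i), isDiag_diagonal _, ?_, ?_⟩
  · simp only [diagonal_pow, Pi.pow_def, Complex.signRe_sq]
    exact diagonal_one
  · have hle : normHS (diagonal (fun i => Complex.signRe (z i)) - X) ≤ normHS (X ^ 2 - 1) := by
      rw [hXz, diagonal_pow, ← diagonal_one, diagonal_sub, diagonal_sub]
      exact normHS_diagonal_le fun i => Complex.norm_signRe_sub_le (z i)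
    have hc : 1 ≤ 1 + 1 / Real.sqrt 2 := le_add_of_nonneg_right (by positivity)
    exact hle.trans (le_mul_of_one_le_left (Real.sqrt_nonneg _) hc)
end

section
/- Let X and Y be unitary d × d matrices with X² = Y² = 1, and let Z₀ = (Y + XYX)/2. Then Z₀ is self-adjoint, Z₀ commutes with X, ‖Z₀² − 1‖ ≤ (1/2)·‖XY − YX‖, and ‖Y − Z₀‖ = (1/2)·‖XY − YX‖, where ‖·‖ is the normalized Hilbert–Schmidt norm. -/
open Matrix

section Frobenius

attribute [local instance] Matrix.frobeniusNormedAddCommGroup Matrix.frobeniusNormedSpace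

variable {m n : Type*} [Fintype m] [Fintype n]

theorem Matrix.re_trace_conjTranspose_mul_self_s4 (A : Matrix m n ℂ) :
    (trace (Aᴴ * A)).re = ‖A‖ ^ 2 := by
  rw [frobenius_norm_def, ← Real.sqrt_eq_rpow, Real.sq_sqrt (by positivity)]
  simp only [trace, diag, mul_apply, conjTranspose_apply, Complex.re_sum, Complex.star_def,
    Complex.conj_mul', Real.rpow_two]
  rw [Finset.sum_comm]
  norm_cast

theorem normHS_eq_norm_div (A : Matrix n n ℂ) : normHS A = ‖A‖ / √(Fintype.card n) := by
  rw [normHS, re_trace_conjTranspose_mul_self_s4, Real.sqrt_div' _ (Nat.cast_nonneg _),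
    Real.sqrt_sq (norm_nonneg A)]

theorem normHS_add_le (A B : Matrix n n ℂ) : normHS (A + B) ≤ normHS A + normHS B := by
  simp only [normHS_eq_norm_div, ← add_div]
  gcongr
  exact norm_add_le A B

theorem normHS_smul (c : ℂ) (A : Matrix n n ℂ) : normHS (c • A) = ‖c‖ * normHS A := by
  simp only [normHS_eq_norm_div, norm_smul, mul_div_assoc]

end Frobenius

theorem normHS_unitary_mul {n : Type*} [Fintype n] [DecidableEq n] {U : Matrix n n ℂ}
    (hU : U ∈ unitaryGroup n ℂ) (A : Matrix n n ℂ) : normHS (U * A) = normHS A := by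
  have hUU : Uᴴ * U = 1 := hU.1
  rw [normHS, conjTranspose_mul, Matrix.mul_assoc, ← Matrix.mul_assoc Uᴴ, hUU, Matrix.one_mul,
    normHS]

theorem star_eq_self_of_mem_unitary_of_sq_eq_one {R : Type*} [Monoid R] [StarMul R] {U : R}
    (hU : U ∈ unitary R) (h : U ^ 2 = 1) : star U = U := by
  rw [← mul_one (star U), ← h, sq, ← mul_assoc, Unitary.star_mul_self_of_mem hU, one_mul]

section Involutions

variable {R : Type*} [Ring R] {X : R}

theorem commute_add_mul_mul_self (hX : X * X = 1) (Y : R) : Commute (Y + X * Y * X) X := by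
  simp only [Commute, SemiconjBy, add_mul, mul_add, mul_assoc, hX, mul_one]
  rw [← mul_assoc X X, hX, one_mul, add_comm]

theorem sub_mul_mul_self_eq_mul_commutator (hX : X * X = 1) (Y : R) :
    Y - X * Y * X = X * (X * Y - Y * X) := by
  rw [mul_sub, ← mul_assoc X X, hX, one_mul, mul_assoc]

theorem sq_add_mul_mul_eq_sq_commutator_add_four {Y : R} (hX : X * X = 1) (hY : Y * Y = 1) :
    (Y + X * Y * X) ^ 2 = (X * Y - Y * X) ^ 2 + 4 := by
  have hXl : ∀ M : R, X * (X * M) = M := fun M => by rw [← mul_assoc, hX, one_mul]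
  have hYl : ∀ M : R, Y * (Y * M) = M := fun M => by rw [← mul_assoc, hY, one_mul]
  simp only [sq, add_mul, mul_add, sub_mul, mul_sub, mul_assoc, hXl, hYl, hX, hY]
  rw [show (4 : R) = 4 • 1 by simp]
  abel

end Involutions

theorem normHS_commutator_sq_le {n : Type*} [Fintype n] [DecidableEq n] {U V : Matrix n n ℂ}
    (hU : U ∈ unitaryGroup n ℂ) (hV : V ∈ unitaryGroup n ℂ) :
    normHS ((U * V - V * U) ^ 2) ≤ 2 * normHS (U * V - V * U) := by
  set A := U * V - V * U
  calc normHS (A ^ 2) = normHS (U * V * A + (-1 : ℂ) • (V * U * A)) := by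
        rw [sq, neg_one_smul, ← sub_eq_add_neg, ← sub_mul]
    _ ≤ normHS (U * V * A) + normHS ((-1 : ℂ) • (V * U * A)) := normHS_add_le _ _
    _ = 2 * normHS A := by
      rw [normHS_smul, normHS_unitary_mul (mul_mem hU hV), normHS_unitary_mul (mul_mem hV hU),
        norm_neg, norm_one, one_mul, two_mul]

theorem stmt_4 (d : ℕ) (X Y : Matrix (Fin d) (Fin d) ℂ)
    (hXu : X ∈ Matrix.unitaryGroup (Fin d) ℂ)
    (hYu : Y ∈ Matrix.unitaryGroup (Fin d) ℂ)
    (hXi : X ^ 2 = 1) (hYi : Y ^ 2 = 1)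
    (Z₀ : Matrix (Fin d) (Fin d) ℂ) (hZ₀ : Z₀ = ((1 : ℂ) / 2) • (Y + X * Y * X)) :
    Z₀ᴴ = Z₀ ∧ Commute Z₀ X ∧
    normHS (Z₀ ^ 2 - 1) ≤ (1 / 2) * normHS (X * Y - Y * X) ∧
    normHS (Y - Z₀) = (1 / 2) * normHS (X * Y - Y * X) := by
  have hXX : X * X = 1 := by rw [← sq, hXi]
  have hYY : Y * Y = 1 := by rw [← sq, hYi]
  have hX : Xᴴ = X := star_eq_self_of_mem_unitary_of_sq_eq_one hXu hXi
  have hY : Yᴴ = Y := star_eq_self_of_mem_unitary_of_sq_eq_one hYu hYi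
  subst hZ₀
  refine ⟨?_, (commute_add_mul_mul_self hXX Y).smul_left _, ?_, ?_⟩
  · simp [hX, hY, Matrix.mul_assoc]
  · have hsq : (((1 : ℂ) / 2) • (Y + X * Y * X)) ^ 2 - 1 =
        ((1 : ℂ) / 4) • (X * Y - Y * X) ^ 2 := by
      rw [smul_pow, sq_add_mul_mul_eq_sq_commutator_add_four hXX hYY,
        show (4 : Matrix (Fin d) (Fin d) ℂ) = 4 • 1 by simp]
      module
    rw [hsq, normHS_smul]
    have := normHS_commutator_sq_le hXu hYu
    norm_num
    linarith
  · rw [show Y - ((1 : ℂ) / 2) • (Y + X * Y * X) = ((1 : ℂ) / 2) • (Y - X * Y * X) by module,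
      sub_mul_mul_self_eq_mul_commutator hXX, normHS_smul, normHS_unitary_mul hXu]
    norm_num
end

section
/- In the group K = ⟨x, y, a, b : a² = b² = e, ab = ba, yay⁻¹ = a, yby⁻¹ = ab, xyx⁻¹ = y²⟩, the element a is trivial in every homomorphism from K to a finite group. -/
/-!
If `x y x⁻¹ = y²` and `x` has finite order `k`, then `y = y ^ 2 ^ k`, so the order of `y` is
odd. Conjugation by `y` fixes `a` and sends `b` to `a b`, hence conjugation by `y ^ m` sends `b`
to `a ^ m b`; taking `m` the order of `y` gives `a ^ m = 1`. Together with `a ^ 2 = 1` this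
forces `a = 1`.
-/

namespace Stmt12

/-- Generators: 0 = x, 1 = y, 2 = a, 3 = b. -/
def X : FreeGroup (Fin 4) := FreeGroup.of 0
def Y : FreeGroup (Fin 4) := FreeGroup.of 1
def A : FreeGroup (Fin 4) := FreeGroup.of 2
def B : FreeGroup (Fin 4) := FreeGroup.of 3

/-- Relators of K = ⟨x,y,a,b : a²=b²=e, ab=ba, yay⁻¹=a, yby⁻¹=ab, xyx⁻¹=y²⟩. -/
def rels : Set (FreeGroup (Fin 4)) :=
  {A ^ 2, B ^ 2, A * B * A⁻¹ * B⁻¹, Y * A * Y⁻¹ * A⁻¹,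
    Y * B * Y⁻¹ * (A * B)⁻¹, X * Y * X⁻¹ * (Y ^ 2)⁻¹}

end Stmt12

section Conjugation

variable {G : Type*} [Group G] {x y a b : G}

theorem pow_mul_mul_inv_pow_of_mul_mul_inv_eq_pow {n : ℕ} (h : x * y * x⁻¹ = y ^ n) (m : ℕ) :
    x ^ m * y * (x ^ m)⁻¹ = y ^ n ^ m := by
  induction m with
  | zero => simp
  | succ m ih =>
    calc x ^ (m + 1) * y * (x ^ (m + 1))⁻¹ = x * (x ^ m * y * (x ^ m)⁻¹) * x⁻¹ := by group
      _ = (x * y * x⁻¹) ^ n ^ m := by rw [ih, conj_pow]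
      _ = y ^ n ^ (m + 1) := by rw [h, ← pow_mul, pow_succ', mul_comm]

theorem IsOfFinOrder.orderOf_coprime_of_mul_mul_inv_eq_pow {n : ℕ} (hx : IsOfFinOrder x)
    (h : x * y * x⁻¹ = y ^ n) : (orderOf y).Coprime n := by
  obtain ⟨k, hk⟩ := Nat.exists_eq_add_one_of_ne_zero hx.orderOf_pos.ne'
  have hy : y ^ (n * n ^ k) = y ^ 1 := by
    rw [← pow_succ', ← hk, ← pow_mul_mul_inv_pow_of_mul_mul_inv_eq_pow h, pow_orderOf_eq_one]
    simp
  exact (Nat.coprime_of_mul_modEq_one _ (_root_.pow_eq_pow_iff_modEq.mp hy)).symm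

theorem pow_mul_mul_inv_pow_of_mul_mul_inv_eq_mul (ha : y * a * y⁻¹ = a)
    (hb : y * b * y⁻¹ = a * b) (m : ℕ) : y ^ m * b * (y ^ m)⁻¹ = a ^ m * b := by
  induction m with
  | zero => simp
  | succ m ih =>
    calc y ^ (m + 1) * b * (y ^ (m + 1))⁻¹ = y * (y ^ m * b * (y ^ m)⁻¹) * y⁻¹ := by group
      _ = (y * a * y⁻¹) ^ m * (y * b * y⁻¹) := by rw [ih, conj_pow]; group
      _ = a ^ (m + 1) * b := by rw [ha, hb, pow_succ, mul_assoc]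

theorem pow_orderOf_eq_one_of_mul_mul_inv_eq_mul (ha : y * a * y⁻¹ = a)
    (hb : y * b * y⁻¹ = a * b) : a ^ orderOf y = 1 := by
  simpa [pow_orderOf_eq_one] using
    (pow_mul_mul_inv_pow_of_mul_mul_inv_eq_mul ha hb (orderOf y)).symm

end Conjugation

theorem stmt_12 (H : Type*) [Group H] [Finite H]
    (φ : PresentedGroup Stmt12.rels →* H) :
    φ (PresentedGroup.of 2) = 1 := by
  set ψ := φ.comp (PresentedGroup.mk Stmt12.rels)
  have rel : ∀ r ∈ Stmt12.rels, ψ r = 1 := fun r hr => by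
    simp [ψ, PresentedGroup.one_of_mem hr]
  simp only [Stmt12.rels, Set.mem_insert_iff, Set.mem_singleton_iff, forall_eq_or_imp, forall_eq,
    map_mul, map_inv, map_pow, mul_inv_eq_one, Stmt12.X, Stmt12.Y, Stmt12.A, Stmt12.B] at rel
  obtain ⟨ha, -, -, hya, hyb, hxy⟩ := rel
  have hy := (isOfFinOrder_of_finite _).orderOf_coprime_of_mul_mul_inv_eq_pow hxy
  exact (pow_eq_one_iff_of_coprime hy).mp ⟨pow_orderOf_eq_one_of_mul_mul_inv_eq_mul hya hyb, ha⟩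
end

section
/- Let Γ be generated by involutions y₁,…,y₇, x_i, x_j, x_k satisfying the 'magic-square-type' relations: x_i y₁ y₂ = x_j y₂ y₃ = y₃ y₄ y₅ = x_i y₅ y₆ = x_k y₆ y₇ = y₁ y₄ y₇ = e, where the three elements in each of these six triples pairwise commute. Then x_i x_j x_i = x_k in Γ. -/
theorem stmt_16 (Γ : Type*) [Group Γ]
    (xi xj xk y1 y2 y3 y4 y5 y6 y7 : Γ)
    (hxi : xi * xi = 1) (hxj : xj * xj = 1) (hxk : xk * xk = 1)
    (hy1 : y1 * y1 = 1) (hy2 : y2 * y2 = 1) (hy3 : y3 * y3 = 1)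
    (hy4 : y4 * y4 = 1) (hy5 : y5 * y5 = 1) (hy6 : y6 * y6 = 1)
    (hy7 : y7 * y7 = 1)
    (r1 : xi * y1 * y2 = 1) (c1a : Commute xi y1) (c1b : Commute xi y2) (c1c : Commute y1 y2)
    (r2 : xj * y2 * y3 = 1) (c2a : Commute xj y2) (c2b : Commute xj y3) (c2c : Commute y2 y3)
    (r3 : y3 * y4 * y5 = 1) (c3a : Commute y3 y4) (c3b : Commute y3 y5) (c3c : Commute y4 y5)
    (r4 : xi * y5 * y6 = 1) (c4a : Commute xi y5) (c4b : Commute xi y6) (c4c : Commute y5 y6)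
    (r5 : xk * y6 * y7 = 1) (c5a : Commute xk y6) (c5b : Commute xk y7) (c5c : Commute y6 y7)
    (r6 : y1 * y4 * y7 = 1) (c6a : Commute y1 y4) (c6b : Commute y1 y7) (c6c : Commute y4 y7) :
    xi * xj * xi = xk := by
  have i1 : y1⁻¹ = y1 := inv_eq_of_mul_eq_one_right hy1
  have i2 : y2⁻¹ = y2 := inv_eq_of_mul_eq_one_right hy2
  have i3 : y3⁻¹ = y3 := inv_eq_of_mul_eq_one_right hy3
  have i4 : y4⁻¹ = y4 := inv_eq_of_mul_eq_one_right hy4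
  have i5 : y5⁻¹ = y5 := inv_eq_of_mul_eq_one_right hy5
  have i6 : y6⁻¹ = y6 := inv_eq_of_mul_eq_one_right hy6
  have i7 : y7⁻¹ = y7 := inv_eq_of_mul_eq_one_right hy7
  -- xi = y1 * y2
  have exi : xi = y1 * y2 := by
    have h : xi * (y1 * y2) = 1 := by rw [← mul_assoc]; exact r1
    rw [eq_inv_of_mul_eq_one_left h, mul_inv_rev, i1, i2, c1c.eq]
  -- xj = y2 * y3
  have exj : xj = y2 * y3 := by
    have h : xj * (y2 * y3) = 1 := by rw [← mul_assoc]; exact r2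
    rw [eq_inv_of_mul_eq_one_left h, mul_inv_rev, i2, i3, c2c.eq]
  -- xi = y5 * y6
  have exi' : xi = y5 * y6 := by
    have h : xi * (y5 * y6) = 1 := by rw [← mul_assoc]; exact r4
    rw [eq_inv_of_mul_eq_one_left h, mul_inv_rev, i5, i6, c4c.eq]
  -- xk = y6 * y7
  have exk : xk = y6 * y7 := by
    have h : xk * (y6 * y7) = 1 := by rw [← mul_assoc]; exact r5
    rw [eq_inv_of_mul_eq_one_left h, mul_inv_rev, i6, i7, c5c.eq]
  -- y3 = y4 * y5
  have e3 : y3 = y4 * y5 := by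
    have h : y3 * (y4 * y5) = 1 := by rw [← mul_assoc]; exact r3
    rw [eq_inv_of_mul_eq_one_left h, mul_inv_rev, i4, i5, c3c.eq]
  -- y1 * y4 = y7
  have e14 : y1 * y4 = y7 := by
    rw [eq_inv_of_mul_eq_one_left r6, i7]
  calc xi * xj * xi = y1 * y2 * (y2 * y3) * (y5 * y6) := by
        rw [← exi, ← exj, ← exi']
    _ = y1 * (y2 * y2) * y3 * (y5 * y6) := by group
    _ = y1 * y3 * (y5 * y6) := by rw [hy2, mul_one]
    _ = y1 * (y4 * y5) * (y5 * y6) := by rw [← e3]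
    _ = (y1 * y4) * (y5 * y5) * y6 := by group
    _ = y7 * y6 := by rw [e14, hy5, mul_one]
    _ = y6 * y7 := c5c.eq.symm
    _ = xk := exk.symm
end

section
/- Let U be a self-adjoint unitary d × d matrix with U² = 1 and t := tr(U) ≥ 0, written in a basis as U = 1_{d₀} ⊕ (−1_{d₀}) ⊕ 1_{d₁} where d₁ = t. Let T be the permutation-type unitary swapping the first two blocks and fixing the third. Then T² = 1, T is self-adjoint, and ‖TUT − (−U)‖ = 2√(tr(U)/d) in the normalized Hilbert–Schmidt norm. -/
open Matrix

namespace Stmt19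

variable (d₀ d₁ : ℕ)

/-- The self-adjoint involution `1_{d₀} ⊕ (−1_{d₀}) ⊕ 1_{d₁}`. -/
def U : Matrix (Fin d₀ ⊕ (Fin d₀ ⊕ Fin d₁)) (Fin d₀ ⊕ (Fin d₀ ⊕ Fin d₁)) ℂ :=
  Matrix.fromBlocks 1 0 0 (Matrix.fromBlocks (-1) 0 0 1)

/-- The permutation of the index set swapping the first two blocks and fixing the third. -/
def swapBlocks : (Fin d₀ ⊕ (Fin d₀ ⊕ Fin d₁)) ≃ (Fin d₀ ⊕ (Fin d₀ ⊕ Fin d₁)) where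
  toFun := Sum.elim (fun i => Sum.inr (Sum.inl i))
    (Sum.elim (fun i => Sum.inl i) (fun j => Sum.inr (Sum.inr j)))
  invFun := Sum.elim (fun i => Sum.inr (Sum.inl i))
    (Sum.elim (fun i => Sum.inl i) (fun j => Sum.inr (Sum.inr j)))
  left_inv p := by rcases p with i | i | j <;> rfl
  right_inv p := by rcases p with i | i | j <;> rfl

/-- The permutation-type unitary swapping the first two blocks and fixing the third. -/
def T : Matrix (Fin d₀ ⊕ (Fin d₀ ⊕ Fin d₁)) (Fin d₀ ⊕ (Fin d₀ ⊕ Fin d₁)) ℂ :=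
  (1 : Matrix (Fin d₀ ⊕ (Fin d₀ ⊕ Fin d₁)) (Fin d₀ ⊕ (Fin d₀ ⊕ Fin d₁)) ℂ).submatrix
    (swapBlocks d₀ d₁) id

lemma T_mul (M : Matrix (Fin d₀ ⊕ (Fin d₀ ⊕ Fin d₁)) (Fin d₀ ⊕ (Fin d₀ ⊕ Fin d₁)) ℂ) :
    T d₀ d₁ * M = M.submatrix (swapBlocks d₀ d₁) id := by
  have : T d₀ d₁ = (1 : Matrix _ _ ℂ).submatrix (swapBlocks d₀ d₁) (Equiv.refl _) := rfl
  rw [this, Matrix.one_submatrix_mul]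
  rfl

lemma mul_T (M : Matrix (Fin d₀ ⊕ (Fin d₀ ⊕ Fin d₁)) (Fin d₀ ⊕ (Fin d₀ ⊕ Fin d₁)) ℂ) :
    M * T d₀ d₁ = M.submatrix id (swapBlocks d₀ d₁) := by
  rw [T, Matrix.mul_submatrix_one]
  rfl

end Stmt19

open Stmt19 in
theorem stmt_19 (d₀ d₁ : ℕ) :
    T d₀ d₁ * T d₀ d₁ = 1 ∧ (T d₀ d₁)ᴴ = T d₀ d₁ ∧
    normHS (T d₀ d₁ * U d₀ d₁ * T d₀ d₁ - (-(U d₀ d₁))) =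
      2 * Real.sqrt ((U d₀ d₁).trace.re / (2 * d₀ + d₁)) := by
  refine ⟨?_, ?_, ?_⟩
  · rw [T_mul]
    ext i j
    rcases i with i | i | i <;> rcases j with j | j | j <;>
      simp [T, swapBlocks, Matrix.one_apply, Sum.inl.injEq, Sum.inr.injEq, eq_comm]
  · ext i j
    rcases i with i | i | i <;> rcases j with j | j | j <;>
      simp [T, swapBlocks, Matrix.one_apply, eq_comm]
  · have hX : T d₀ d₁ * U d₀ d₁ * T d₀ d₁ - (-(U d₀ d₁)) =
        Matrix.fromBlocks 0 0 0 (Matrix.fromBlocks 0 0 0 ((2:ℂ) • (1 : Matrix (Fin d₁) (Fin d₁) ℂ))) := by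
      rw [T_mul, mul_T, Matrix.submatrix_submatrix]
      ext i j
      rcases i with i | i | i <;> rcases j with j | j | j <;>
        simp [U, swapBlocks, Matrix.one_apply, Matrix.smul_apply, mul_ite, two_mul, ite_add_ite, one_add_one_eq_two]
    rw [hX]
    have tfb : ∀ {m n : Type} [Fintype m] [Fintype n] (A : Matrix m m ℂ) (B C)
        (D : Matrix n n ℂ), (Matrix.fromBlocks A B C D).trace = A.trace + D.trace := by
      intro m n _ _ A B C D
      simp [Matrix.trace, Fintype.sum_sum_type, Matrix.diag, Matrix.fromBlocks]
    have hU : (U d₀ d₁).trace = (d₁ : ℂ) := by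
      simp [U, tfb]
    set X : Matrix (Fin d₀ ⊕ (Fin d₀ ⊕ Fin d₁)) (Fin d₀ ⊕ (Fin d₀ ⊕ Fin d₁)) ℂ :=
      Matrix.fromBlocks 0 0 0 (Matrix.fromBlocks 0 0 0
        ((2:ℂ) • (1 : Matrix (Fin d₁) (Fin d₁) ℂ))) with hXdef
    have htr : (Xᴴ * X).trace = (4 * d₁ : ℂ) := by
      rw [hXdef]
      simp [Matrix.fromBlocks_conjTranspose, Matrix.fromBlocks_multiply, tfb,
        Matrix.trace_smul, smul_smul]
      norm_num
    rw [normHS, htr, hU]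
    have hcard : (Fintype.card (Fin d₀ ⊕ (Fin d₀ ⊕ Fin d₁)) : ℝ) = 2 * d₀ + d₁ := by
      simp [Fintype.card_sum]; ring
    rw [hcard]
    have h4 : ((4 * (d₁:ℂ)).re / (2 * (d₀:ℝ) + d₁)) = 4 * ((d₁ : ℝ)/(2 * d₀ + d₁)) := by
      have : (4 * (d₁:ℂ)) = ((4 * d₁ : ℝ) : ℂ) := by push_cast; ring
      rw [this, Complex.ofReal_re]; ring
    have h5 : ((d₁:ℂ)).re = (d₁ : ℝ) := rfl
    rw [h4, h5, Real.sqrt_mul (by norm_num : (0:ℝ) ≤ 4) _]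
    rw [show (4:ℝ) = 2^2 by norm_num, Real.sqrt_sq (by norm_num : (0:ℝ) ≤ 2)]
end
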